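/- arXiv:1803.05782 — 3 statements merged into one kernel-verified Lean document; each statement's English description precedes it below -/
import Mathlib

section
/- With the setup below, for all sufficiently large p ∈ ℕ and every g ∈ G₁: 2|g| + |c^p| − 8C' − 8K ≤ |g⁻¹c^p g| ≤ 2|g| + |c^p|. -/
open Metric Set Filter Pointwise

namespace ACcogrowth

variable {X : Type*} [MetricSpace X]

/-- A map `γ` is a geodesic when restricted to the interval `[a,b]`. -/
def IsGeodesicOn (γ : ℝ → X) (a b : ℝ) : Prop :=
  ∀ s ∈ Set.Icc a b, ∀ t ∈ Set.Icc a b, dist (γ s) (γ t) = |s - t|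

/-- `X` is a geodesic metric space: any two points are joined by a geodesic. -/
def GeodesicSpace (X : Type*) [MetricSpace X] : Prop :=
  ∀ x y : X, ∃ γ : ℝ → X, IsGeodesicOn γ 0 (dist x y) ∧ γ 0 = x ∧ γ (dist x y) = y

/-- The nearest-point projection of `x` to `Y`. -/
def proj (Y : Set X) (x : X) : Set X := {y ∈ Y | dist x y = Metric.infDist x Y}

/-- The projection of a set `Z` to `Y`. -/
def projSet (Y Z : Set X) : Set X := ⋃ z ∈ Z, proj Y z

/-- The projection distance `d^π_Y(Z,Z')`. -/
noncomputable def dpi (Y Z Z' : Set X) : ℝ := Metric.diam (projSet Y Z ∪ projSet Y Z')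

/-- `Y` is `C`-strongly contracting. -/
def StronglyContractingWith (C : ℝ) (Y : Set X) : Prop :=
  0 ≤ C ∧ ∀ x x' : X, dist x x' ≤ Metric.infDist x Y →
    Metric.diam (proj Y x ∪ proj Y x') ≤ C

/-- `Y` is strongly contracting. -/
def StronglyContracting (Y : Set X) : Prop := ∃ C, StronglyContractingWith C Y

variable {G : Type*} [Group G] [MulAction G X]

/-- The action of `G` on `X` is (metrically) proper. -/
def ProperAction (G : Type*) [Group G] [MulAction G X] (o : X) : Prop :=
  ∀ (x : X) (r : ℝ), {g : G | dist x (g • o) ≤ r}.Finite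

/-- The orbit of the basepoint under the cyclic group generated by `c`. -/
def cOrbit (c : G) (o : X) : Set X := Set.range fun i : ℤ => c ^ i • o

/-- `c` is a strongly contracting element for the action. -/
def IsStronglyContractingElement (c : G) (o : X) : Prop :=
  ¬ IsOfFinOrder c ∧ StronglyContracting (cOrbit c o)

/-- The elementary closure `E(c)`: elements moving `⟨c⟩.o` a finite Hausdorff distance. -/
def Ec (c : G) (o : X) : Set G :=
  {g : G | EMetric.hausdorffEdist (g • cOrbit c o) (cOrbit c o) ≠ ⊤}

/-- The axis `𝓔 = E(c).o`. -/
def Esub (c : G) (o : X) : Set X := (· • o) '' Ec c o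

/-- The family of distinct `G`-translates of `𝓔`. -/
def translates (c : G) (o : X) : Set (Set X) := Set.range fun g : G => g • Esub c o

/-- Axiom (P0) with constant `θ` for the family of translates. -/
def AxiomP0 (c : G) (o : X) (θ : ℝ) : Prop :=
  ∀ 𝓨 ∈ translates c o, ∀ 𝓧 ∈ translates c o, 𝓧 ≠ 𝓨 → dpi 𝓨 𝓧 𝓧 ≤ θ

/-- Axiom (P1) with constant `θ` for the family of translates. -/
def AxiomP1 (c : G) (o : X) (θ : ℝ) : Prop :=
  ∀ 𝓧 ∈ translates c o, ∀ 𝓨 ∈ translates c o, ∀ 𝓩 ∈ translates c o,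
    𝓧 ≠ 𝓨 → 𝓨 ≠ 𝓩 → 𝓧 ≠ 𝓩 → dpi 𝓨 𝓧 𝓩 > θ → dpi 𝓧 𝓨 𝓩 ≤ θ

/-- `C'` is a bounded-geodesic-image constant for all translates of `𝓔`. -/
def BGIconst (c : G) (o : X) (C' : ℝ) : Prop :=
  ∀ g : G, ∀ γ : ℝ → X, ∀ a b : ℝ, IsGeodesicOn γ a b →
    (∀ t ∈ Set.Icc a b, C' ≤ Metric.infDist (γ t) (g • Esub c o)) →
    Metric.diam (projSet (g • Esub c o) (γ '' Set.Icc a b)) ≤ C'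

/-- The set `G₁`. -/
def Gone (c : G) (o : X) (K : ℝ) : Set G :=
  {g : G | dpi (Esub c o) {o} {g • o} ≤ 2 * K ∧
    dpi (g • Esub c o) {o} {g • o} ≤ 2 * K ∧ g • Esub c o ≠ Esub c o}

/-- The set `G_{2,p}` of conjugates of `c^p` by elements of `G₁`. -/
def Gtwo (c : G) (o : X) (K : ℝ) (p : ℕ) : Set G :=
  (fun g : G => g⁻¹ * c ^ p * g) '' Gone c o K

/-- A subset `S` of `G` is `s`-separated (with respect to the orbit pseudo-metric). -/
def SeparatedSet (o : X) (s : ℝ) (S : Set G) : Prop :=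
  ∀ x ∈ S, ∀ y ∈ S, x ≠ y → s ≤ dist (x • o) (y • o)

/-- There is a geodesic from `x` to `y` passing within distance `D` of `z`. -/
def GeodesicPassesNear (x y z : X) (D : ℝ) : Prop :=
  ∃ γ : ℝ → X, IsGeodesicOn γ 0 (dist x y) ∧ γ 0 = x ∧ γ (dist x y) = y ∧
    ∃ t ∈ Set.Icc 0 (dist x y), dist (γ t) z ≤ D

/-- The shadowed subset `G'_{4,p,D}` of a given set `G₃`. -/
def Gfour' (c : G) (o : X) (G₃ : Set G) (p : ℕ) (D : ℝ) : Set G :=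
  {x ∈ G₃ | ∃ y ∈ G₃, y ≠ x ∧ GeodesicPassesNear o (x • o) ((y * c ^ (2 * p)) • o) D}

/-- The growth rate of a subset `H ⊆ G` with respect to the induced pseudo-metric. -/
noncomputable def growthRate (o : X) (H : Set G) : ℝ :=
  Filter.limsup
    (fun r : ℝ => Real.log (({h ∈ H | dist o (h • o) ≤ r}).ncard) / r) Filter.atTop

/-- The growth rate of a subset `B ⊆ X`. -/
noncomputable def growthRateX (o : X) (B : Set X) : ℝ :=
  Filter.limsup
    (fun r : ℝ => Real.log (({b ∈ B | dist o b ≤ r}).ncard) / r) Filter.atTop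

/-- `H` is divergent: its Poincaré series diverges at `s = δ_H`. -/
def Divergent (o : X) (H : Set G) : Prop :=
  ¬ Summable fun h : H => Real.exp (-(growthRate o H) * dist o ((h : G) • o))

/-- `G` has purely exponential growth with rate `δ`, shell width `Δ` and constant `A`. -/
def PurelyExponentialWith (G : Type*) [Group G] [MulAction G X] (o : X)
    (δ Δ A : ℝ) : Prop :=
  0 < δ ∧ 0 < Δ ∧ 1 ≤ A ∧ ∀ r : ℝ, 0 ≤ r →
    Real.exp (δ * r) / A ≤
        (({g : G | r < dist o (g • o) ∧ dist o (g • o) ≤ r + Δ}).ncard : ℝ) ∧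
    (({g : G | r < dist o (g • o) ∧ dist o (g • o) ≤ r + Δ}).ncard : ℝ) ≤
        A * Real.exp (δ * r)

/-- `G` has purely exponential growth. -/
def PurelyExponential (G : Type*) [Group G] [MulAction G X] (o : X) : Prop :=
  ∃ δ Δ A : ℝ, PurelyExponentialWith G o δ Δ A

/-- The tree's-worth map: `(g₁, …, g_k) ↦ (g₁ c g₂ c ⋯ g_k c).o`. -/
def treeMap (o : X) (c : G) (l : List G) : X := (l.map fun g => g * c).prod • o

/-! A geodesic from `x` to `z` enters the `C'`-neighbourhood of `𝓔` within `2C'` of the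
projection of `x`, and leaves it for the last time within `2C'` of the projection of `z`: on the
stretches before and after, bounded geodesic image pins the projections down. So
`d(x, z) ≥ d(x, π x) + d(π x, π z) + d(π z, z) - 8C'` as soon as the projections are more than `C'`
apart. For `x = g.o` and `z = c^p g.o`, both `g.o` and `c^p g.o` project within `2K` of `o` and of
`c^p.o` respectively, because `g ∈ G₁` and `c^p` preserves `𝓔`. -/

namespace IsGeodesicOn

variable {γ : ℝ → X} {a b : ℝ}

lemma mono (hγ : IsGeodesicOn γ a b) {a' b' : ℝ} (ha : a ≤ a') (hb : b' ≤ b) :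
    IsGeodesicOn γ a' b' :=
  fun s hs t ht => hγ s ⟨ha.trans hs.1, hs.2.trans hb⟩ t ⟨ha.trans ht.1, ht.2.trans hb⟩

lemma comp_neg (hγ : IsGeodesicOn γ a b) : IsGeodesicOn (fun t => γ (-t)) (-b) (-a) := by
  intro s hs t ht
  rw [hγ (-s) ⟨le_neg.1 hs.2, neg_le.1 hs.1⟩ (-t) ⟨le_neg.1 ht.2, neg_le.1 ht.1⟩,
    ← abs_neg, neg_sub_neg, neg_sub]

lemma dist_eq_sub (hγ : IsGeodesicOn γ a b) {s t : ℝ} (hs : s ∈ Icc a b) (ht : t ∈ Icc a b)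
    (hst : s ≤ t) : dist (γ s) (γ t) = t - s := by
  rw [hγ s hs t ht, abs_sub_comm, abs_of_nonneg (sub_nonneg.2 hst)]

lemma continuousOn (hγ : IsGeodesicOn γ a b) : ContinuousOn γ (Icc a b) :=
  (LipschitzOnWith.of_dist_le_mul fun s hs t ht => by
    rw [hγ s hs t ht, NNReal.coe_one, one_mul, Real.dist_eq]).continuousOn

lemma isBounded_image (hγ : IsGeodesicOn γ a b) : Bornology.IsBounded (γ '' Icc a b) :=
  (isCompact_Icc.image_of_continuousOn hγ.continuousOn).isBounded

end IsGeodesicOn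

lemma mem_proj_self {Y : Set X} {y : X} (hy : y ∈ Y) : y ∈ proj Y y :=
  ⟨hy, by rw [dist_self, infDist_zero_of_mem hy]⟩

lemma smul_mem_proj [IsIsometricSMul G X] (g : G) {Y : Set X} {x q : X} (hq : q ∈ proj Y x) :
    g • q ∈ proj (g • Y) (g • x) := by
  refine ⟨smul_mem_smul_set hq.1, ?_⟩
  rw [dist_smul, hq.2, infDist, infDist, infEDist_smul]

lemma isBounded_projSet {Y Z : Set X} (hZ : Bornology.IsBounded Z) :
    Bornology.IsBounded (projSet Y Z) := by
  rcases Z.eq_empty_or_nonempty with rfl | ⟨z₀, hz₀⟩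
  · simp [projSet]
  obtain ⟨r, hr⟩ := (isBounded_iff_subset_closedBall z₀).1 hZ
  refine (isBounded_iff_subset_closedBall z₀).2 ⟨infDist z₀ Y + 2 * r, ?_⟩
  simp only [projSet, iUnion_subset_iff]
  intro z hz q hq
  have hzz₀ : dist z z₀ ≤ r := hr hz
  have hqz : dist q z ≤ infDist z₀ Y + r := by
    rw [dist_comm, hq.2]
    linarith [infDist_le_infDist_add_dist (s := Y) (x := z) (y := z₀)]
  rw [mem_closedBall]
  linarith [dist_triangle q z z₀]

lemma dist_le_dpi {Y : Set X} {x x' q q' : X} (hq : q ∈ proj Y x) (hq' : q' ∈ proj Y x') :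
    dist q q' ≤ dpi Y {x} {x'} :=
  dist_le_diam_of_mem
    ((isBounded_projSet Bornology.isBounded_singleton).union
      (isBounded_projSet Bornology.isBounded_singleton))
    (Or.inl (mem_biUnion rfl hq)) (Or.inr (mem_biUnion rfl hq'))

lemma proj_nonempty_of_finite_inter_closedBall {Y : Set X} (hY : Y.Nonempty) (x : X)
    (hfin : ∀ r, (Y ∩ closedBall x r).Finite) : (proj Y x).Nonempty := by
  set r := infDist x Y + 1
  have hne : (Y ∩ closedBall x r).Nonempty := by
    obtain ⟨y, hy, hxy⟩ := (infDist_lt_iff hY).1 (lt_add_one (infDist x Y))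
    exact ⟨y, hy, mem_closedBall'.2 hxy.le⟩
  obtain ⟨y₀, ⟨hy₀, hy₀r⟩, hmin⟩ := exists_min_image _ (dist x) (hfin r) hne
  refine ⟨y₀, hy₀, le_antisymm ((le_infDist hY).2 fun y hy => ?_) (infDist_le_dist_of_mem hy₀)⟩
  by_cases hyr : dist x y ≤ r
  · exact hmin y ⟨hy, mem_closedBall'.2 hyr⟩
  · exact (mem_closedBall'.1 hy₀r).trans (not_le.1 hyr).le

lemma smul_cOrbit_self {α : Type*} [MulAction G α] (c : G) (o : α) :
    c • cOrbit c o = cOrbit c o := by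
  ext y
  constructor
  · rintro ⟨_, ⟨i, rfl⟩, rfl⟩
    exact ⟨1 + i, show c ^ (1 + i) • o = c • c ^ i • o by rw [zpow_add, zpow_one, mul_smul]⟩
  · rintro ⟨i, rfl⟩
    refine ⟨c ^ (i - 1) • o, ⟨i - 1, rfl⟩, ?_⟩
    show c • c ^ (i - 1) • o = c ^ i • o
    rw [← mul_smul, ← zpow_one_add, add_sub_cancel]

lemma mul_mem_Ec_iff [IsIsometricSMul G X] (c h : G) (o : X) :
    c * h ∈ Ec c o ↔ h ∈ Ec c o := by
  have hiso := hausdorffEDist_image (s := h • cOrbit c o) (t := cOrbit c o) (isometry_smul X c)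
  rw [image_smul, image_smul, smul_cOrbit_self, ← mul_smul] at hiso
  show hausdorffEDist _ _ ≠ ⊤ ↔ hausdorffEDist _ _ ≠ ⊤
  rw [hiso]

lemma o_mem_Esub (c : G) (o : X) : o ∈ Esub c o :=
  ⟨1, show hausdorffEDist _ _ ≠ ⊤ by simp, one_smul G o⟩

lemma smul_Esub_self [IsIsometricSMul G X] (c : G) (o : X) : c • Esub c o = Esub c o := by
  ext y
  constructor
  · rintro ⟨_, ⟨h, hh, rfl⟩, rfl⟩
    exact ⟨c * h, (mul_mem_Ec_iff c h o).2 hh, mul_smul c h o⟩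
  · rintro ⟨h, hh, rfl⟩
    refine ⟨(c⁻¹ * h) • o, ⟨c⁻¹ * h, (mul_mem_Ec_iff c _ o).1 ?_, rfl⟩, ?_⟩
    · rwa [mul_inv_cancel_left]
    · show c • (c⁻¹ * h) • o = h • o
      rw [← mul_smul, mul_inv_cancel_left]

lemma pow_smul_Esub_self [IsIsometricSMul G X] (c : G) (o : X) (p : ℕ) :
    c ^ p • Esub c o = Esub c o := by
  simpa using MulAction.mem_fixedBy_zpow (α := Set X) (smul_Esub_self c o) p

lemma proj_Esub_nonempty {o : X} (hproper : ProperAction G o) (c : G) (x : X) :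
    (proj (Esub c o) x).Nonempty :=
  proj_nonempty_of_finite_inter_closedBall ⟨o, o_mem_Esub c o⟩ x fun r =>
    ((hproper x r).image (· • o)).subset <| by
      rintro _ ⟨⟨g, -, rfl⟩, hg⟩
      exact ⟨g, mem_closedBall'.1 hg, rfl⟩

def HasBoundedGeodesicImage (Y : Set X) (D : ℝ) : Prop :=
  ∀ γ : ℝ → X, ∀ a b : ℝ, IsGeodesicOn γ a b →
    (∀ t ∈ Icc a b, D ≤ infDist (γ t) Y) → diam (projSet Y (γ '' Icc a b)) ≤ D

namespace HasBoundedGeodesicImage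

variable {Y : Set X} {D : ℝ} {γ : ℝ → X} {a b : ℝ}

lemma dist_proj_le (hY : HasBoundedGeodesicImage Y D) (hγ : IsGeodesicOn γ a b)
    (hfar : ∀ t ∈ Icc a b, D ≤ infDist (γ t) Y) {s s' : ℝ} (hs : s ∈ Icc a b)
    (hs' : s' ∈ Icc a b) {q q' : X} (hq : q ∈ proj Y (γ s)) (hq' : q' ∈ proj Y (γ s')) :
    dist q q' ≤ D :=
  (dist_le_diam_of_mem (isBounded_projSet hγ.isBounded_image)
    (mem_biUnion (mem_image_of_mem γ hs) hq) (mem_biUnion (mem_image_of_mem γ hs') hq')).trans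
    (hY γ a b hγ hfar)

lemma dist_proj_le_of_first_entry (hY : HasBoundedGeodesicImage Y D)
    (hproj : ∀ x, (proj Y x).Nonempty) {t : ℝ} (hγ : IsGeodesicOn γ a t) (hat : a ≤ t)
    (hfar : ∀ s ∈ Ico a t, D ≤ infDist (γ s) Y) (hnear : infDist (γ t) Y ≤ D) {q : X}
    (hq : q ∈ proj Y (γ a)) : dist (γ t) q ≤ 2 * D := by
  rcases hat.eq_or_lt with rfl | hat
  · linarith [hq.2, infDist_nonneg (x := γ a) (s := Y)]
  refine le_of_forall_pos_le_add fun ε hε => ?_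
  set s := max a (t - ε / 2)
  have hs : s ∈ Ico a t := ⟨le_max_left _ _, max_lt hat (by linarith)⟩
  have hts : t - s ≤ ε / 2 := by linarith [le_max_right a (t - ε / 2)]
  obtain ⟨q', hq'⟩ := hproj (γ s)
  have hqq' : dist q q' ≤ D :=
    hY.dist_proj_le (hγ.mono le_rfl hs.2.le) (fun u hu => hfar u ⟨hu.1, hu.2.trans_lt hs.2⟩)
      (left_mem_Icc.2 hs.1) (right_mem_Icc.2 hs.1) hq hq'
  have hst : dist (γ s) (γ t) = t - s :=
    hγ.dist_eq_sub ⟨hs.1, hs.2.le⟩ (right_mem_Icc.2 hat.le) hs.2.le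
  have hsq' : dist (γ s) q' ≤ D + (t - s) := by
    rw [hq'.2]
    linarith [infDist_le_infDist_add_dist (s := Y) (x := γ s) (y := γ t)]
  calc dist (γ t) q ≤ dist (γ t) (γ s) + dist (γ s) q' + dist q' q := dist_triangle4 _ _ _ _
    _ ≤ 2 * D + ε := by rw [dist_comm, hst, dist_comm q']; linarith

lemma le_sub_of_dist_proj_gt (hY : HasBoundedGeodesicImage Y D)
    (hproj : ∀ x, (proj Y x).Nonempty) (hγ : IsGeodesicOn γ a b) (hab : a ≤ b) {px pz : X}
    (hpx : px ∈ proj Y (γ a)) (hpz : pz ∈ proj Y (γ b)) (hfar : D < dist px pz) :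
    dist (γ a) px + dist px pz + dist (γ b) pz - 8 * D ≤ b - a := by
  set S := Icc a b ∩ (fun t => infDist (γ t) Y) ⁻¹' Iic D
  have hS : IsCompact S := isCompact_Icc.of_isClosed_subset
    (((continuous_infDist_pt Y).comp_continuousOn hγ.continuousOn).preimage_isClosed_of_isClosed
      isClosed_Icc isClosed_Iic) inter_subset_left
  have hSne : S.Nonempty := by
    by_contra hempty
    have hout : ∀ t ∈ Icc a b, D ≤ infDist (γ t) Y :=
      fun t ht => not_lt.1 fun hlt => hempty ⟨t, ht, hlt.le⟩
    exact hfar.not_ge <| hY.dist_proj_le hγ hout (left_mem_Icc.2 hab) (right_mem_Icc.2 hab) hpx hpz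
  set t₁ := sInf S
  set t₂ := sSup S
  have ht₁ : t₁ ∈ S := hS.sInf_mem hSne
  have ht₂ : t₂ ∈ S := hS.sSup_mem hSne
  have ht₁₂ : t₁ ≤ t₂ := csInf_le_csSup hSne hS.bddBelow hS.bddAbove
  have hentry : dist (γ t₁) px ≤ 2 * D := by
    refine hY.dist_proj_le_of_first_entry hproj (hγ.mono le_rfl ht₁.1.2) ht₁.1.1
      (fun s hs => not_lt.1 fun hlt => ?_) ht₁.2 hpx
    exact hs.2.not_ge (csInf_le hS.bddBelow ⟨⟨hs.1, hs.2.le.trans ht₁.1.2⟩, hlt.le⟩)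
  have hexit : dist (γ t₂) pz ≤ 2 * D := by
    have hrev := hY.dist_proj_le_of_first_entry hproj (hγ.mono ht₂.1.1 le_rfl).comp_neg
      (neg_le_neg ht₂.1.2) (fun s hs => not_lt.1 fun hlt => ?_) (by simpa using ht₂.2)
      (by simpa using hpz)
    · simpa using hrev
    · have hs' : -s ∈ S := ⟨⟨by linarith [ht₂.1.1, hs.2], by linarith [hs.1]⟩, hlt.le⟩
      exact (le_csSup hS.bddAbove hs').not_gt (by linarith [hs.2])
  have hd₁ := hγ.dist_eq_sub (left_mem_Icc.2 hab) ht₁.1 ht₁.1.1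
  have hd₁₂ := hγ.dist_eq_sub ht₁.1 ht₂.1 ht₁₂
  have hd₂ := hγ.dist_eq_sub ht₂.1 (right_mem_Icc.2 hab) ht₂.1.2
  linarith [dist_triangle (γ a) (γ t₁) px, dist_triangle4 px (γ t₁) (γ t₂) pz,
    dist_triangle (γ b) (γ t₂) pz, dist_comm px (γ t₁), dist_comm (γ b) (γ t₂)]

lemma le_dist_of_dist_proj_gt (hY : HasBoundedGeodesicImage Y D) (hX : GeodesicSpace X)
    (hproj : ∀ x, (proj Y x).Nonempty) {x z px pz : X} (hpx : px ∈ proj Y x)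
    (hpz : pz ∈ proj Y z) (hfar : D < dist px pz) :
    dist x px + dist px pz + dist z pz - 8 * D ≤ dist x z := by
  obtain ⟨γ, hγ, hγ0, hγ1⟩ := hX x z
  rw [← hγ0] at hpx
  rw [← hγ1] at hpz
  have key := hY.le_sub_of_dist_proj_gt hproj hγ dist_nonneg hpx hpz hfar
  rwa [hγ0, hγ1, sub_zero] at key

end HasBoundedGeodesicImage

lemma dist_conj_smul [IsIsometricSMul G X] (g h : G) (o : X) :
    dist o ((g⁻¹ * h * g) • o) = dist (g • o) (h • g • o) := by
  rw [← dist_smul g, ← mul_smul, ← mul_smul, show g * (g⁻¹ * h * g) = h * g by group]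

theorem norm_conjugate_estimate_general
    {G : Type*} [Group G] {X : Type*} [MetricSpace X]
    [MulAction G X] [IsIsometricSMul G X] (o : X)
    (hgeo : GeodesicSpace X)
    (hproper : ProperAction G o)
    (c : G)
    (C' K : ℝ)
    (hBGI : BGIconst c o C')
    (hnorm : Filter.Tendsto (fun p : ℕ => dist o (c ^ p • o)) Filter.atTop Filter.atTop) :
    ∃ P : ℕ, ∀ p ≥ P, ∀ g ∈ Gone c o K,
      2 * dist o (g • o) + dist o (c ^ p • o) - 8 * C' - 8 * K ≤
          dist o ((g⁻¹ * c ^ p * g) • o) ∧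
      dist o ((g⁻¹ * c ^ p * g) • o) ≤ 2 * dist o (g • o) + dist o (c ^ p • o) := by
  obtain ⟨P, hP⟩ := eventually_atTop.1 (hnorm.eventually_gt_atTop (4 * K + C'))
  have hE : HasBoundedGeodesicImage (Esub c o) C' := one_smul G (Esub c o) ▸ hBGI 1
  have hproj := proj_Esub_nonempty hproper c
  refine ⟨P, fun p hp g hg => ?_⟩
  obtain ⟨px, hpx⟩ := hproj (g • o)
  have hopx : dist o px ≤ 2 * K := (dist_le_dpi (mem_proj_self (o_mem_Esub c o)) hpx).trans hg.1
  have hpz : c ^ p • px ∈ proj (Esub c o) (c ^ p • g • o) := by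
    simpa only [pow_smul_Esub_self] using smul_mem_proj (c ^ p) hpx
  have hshift : dist o (c ^ p • o) - 4 * K ≤ dist px (c ^ p • px) := by
    linarith [dist_triangle4 o px (c ^ p • px) (c ^ p • o), dist_smul (c ^ p) px o,
      dist_comm px o]
  have hlower := hE.le_dist_of_dist_proj_gt hgeo hproj hpx hpz (by linarith [hP p hp])
  rw [dist_conj_smul]
  constructor
  · linarith [dist_triangle o px (g • o), dist_smul (c ^ p) (g • o) px, dist_comm px (g • o)]
  · linarith [dist_triangle4 (g • o) o (c ^ p • o) (c ^ p • g • o), dist_smul (c ^ p) o (g • o),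
      dist_comm (g • o) o]

/-- **Lemma.** For all sufficiently large `p` and every `g ∈ G₁`:
`2|g| + |c^p| − 8C' − 8K ≤ |g⁻¹ c^p g| ≤ 2|g| + |c^p|`. -/
theorem norm_conjugate_estimate
    {G : Type*} [Group G] {X : Type*} [MetricSpace X]
    [MulAction G X] [IsIsometricSMul G X] (o : X)
    (hgeo : GeodesicSpace X)
    (hproper : ProperAction G o)
    (c : G) (hc : IsStronglyContractingElement c o)
    (C C' K : ℝ)
    (hC : ∀ g : G, StronglyContractingWith C (g • Esub c o))
    (hCC' : C ≤ C') (hBGI : BGIconst c o C')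
    (hK : K > C)
    (hnorm : Filter.Tendsto (fun p : ℕ => dist o (c ^ p • o)) Filter.atTop Filter.atTop) :
    ∃ P : ℕ, ∀ p ≥ P, ∀ g ∈ Gone c o K,
      2 * dist o (g • o) + dist o (c ^ p • o) - 8 * C' - 8 * K ≤
          dist o ((g⁻¹ * c ^ p * g) • o) ∧
      dist o ((g⁻¹ * c ^ p * g) • o) ≤ 2 * dist o (g • o) + dist o (c ^ p • o) :=
  norm_conjugate_estimate_general o hgeo hproper c C' K hBGI hnorm

end ACcogrowth
end

section
/- Let G act properly by isometries on a geodesic metric space X with basepoint o and with a strongly contracting element c', and suppose G has purely exponential growth (in particular δ_G > 0). Then every infinite normal subgroup N of G contains an element that does not lie in E(c'); equivalently, if an infinite normal subgroup N of G satisfies N ⊆ E(c'), then G = E(c') is virtually cyclic and G does not have purely exponential growth. -/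
open Metric Set Filter Pointwise

namespace ACcogrowth

variable {X : Type*} [MetricSpace X]

variable {G : Type*} [Group G] [MulAction G X]

/-!
Contraction makes the orbit `⟨c⟩.o` undistorted and forces every translate `g⟨c⟩.o` with
`g ∈ E(c)` to pass uniformly close to `⟨c⟩.o`; hence `E(c).o` lies in a bounded neighbourhood of
`⟨c⟩.o`, and `E(c)` has linear growth. If an infinite normal subgroup `N` were contained in
`E(c)`, pigeonholing its elements against that neighbourhood would give `n₁ n₂⁻¹ = c^k ∈ N` with
`k ≠ 0`. Then every conjugate `g c^{kq} g⁻¹` lies in `N ⊆ E(c)`, which keeps `g⟨c⟩.o` at finite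
Hausdorff distance from `⟨c⟩.o`; so `G = E(c)` would grow linearly, contradicting purely
exponential growth.
-/

section Contracting

variable {C : ℝ} {Y : Set X}

lemma proj_subset_closedBall (x : X) : proj Y x ⊆ closedBall x (infDist x Y) :=
  fun _ hy => mem_closedBall'.2 hy.2.le

lemma exists_mem_proj {x : X} (hY : Y.Nonempty) (hfin : ∀ r, (Y ∩ closedBall x r).Finite) :
    ∃ y, y ∈ proj Y x := by
  obtain ⟨y₀, hy₀, hxy₀⟩ := (infDist_lt_iff hY).1 (lt_add_one (infDist x Y))
  have hy₀' : y₀ ∈ Y ∩ closedBall x (infDist x Y + 1) := ⟨hy₀, mem_closedBall'.2 hxy₀.le⟩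
  obtain ⟨y, ⟨hyY, hyB⟩, hmin⟩ := Set.exists_min_image _ (dist x) (hfin _) ⟨y₀, hy₀'⟩
  refine ⟨y, hyY, le_antisymm ((le_infDist hY).2 fun z hz => ?_) (infDist_le_dist_of_mem hyY)⟩
  by_cases hzB : z ∈ closedBall x (infDist x Y + 1)
  · exact hmin z ⟨hz, hzB⟩
  · exact (mem_closedBall'.1 hyB).trans (not_le.1 (mt mem_closedBall'.2 hzB)).le

lemma StronglyContractingWith.dist_le_of_mem_proj (hC : StronglyContractingWith C Y)
    {x x' p q : X} (h : dist x x' ≤ infDist x Y) (hp : p ∈ proj Y x) (hq : q ∈ proj Y x') :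
    dist p q ≤ C := by
  have hb : Bornology.IsBounded (proj Y x ∪ proj Y x') :=
    (isBounded_closedBall.subset (proj_subset_closedBall x)).union
      (isBounded_closedBall.subset (proj_subset_closedBall x'))
  exact (dist_le_diam_of_mem hb (.inl hp) (.inr hq)).trans (hC.2 x x' h)

lemma StronglyContractingWith.dist_le_add_of_mem_proj (hC : StronglyContractingWith C Y)
    {x x' p q : X} (hp : p ∈ proj Y x) (hq : q ∈ proj Y x') :
    dist p q ≤ C + 4 * dist x x' := by
  by_cases h : dist x x' ≤ infDist x Y
  · linarith [hC.dist_le_of_mem_proj h hp hq, dist_nonneg (x := x) (y := x')]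
  have hx' : infDist x' Y ≤ infDist x Y + dist x' x := infDist_le_infDist_add_dist
  calc dist p q ≤ dist p x + dist x x' + dist x' q := dist_triangle4 _ _ _ _
    _ = infDist x Y + dist x x' + infDist x' Y := by rw [dist_comm p, hp.2, hq.2]
    _ ≤ C + 4 * dist x x' := by rw [dist_comm x'] at hx'; linarith [hC.1]

lemma StronglyContractingWith.dist_proj_le_of_chain (hC : StronglyContractingWith C Y)
    {π : X → X} (hπ : ∀ x, π x ∈ proj Y x) {x : ℕ → X} {n : ℕ}
    (hx : ∀ k < n, dist (x k) (x (k + 1)) ≤ infDist (x k) Y) :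
    dist (π (x 0)) (π (x n)) ≤ n * C := by
  have := dist_le_range_sum_of_dist_le (f := π ∘ x) (d := fun _ => C) n
    fun hk => hC.dist_le_of_mem_proj (hx _ hk) (hπ _) (hπ _)
  simpa using this

end Contracting

lemma IsGeodesicOn.dist_min_succ_le {γ : ℝ → X} {T : ℝ} (hγ : IsGeodesicOn γ 0 T) (hT : 0 ≤ T)
    (k : ℕ) : dist (γ (min k T)) (γ (min (k + 1 : ℕ) T)) ≤ 1 := by
  have hmem : ∀ l : ℕ, min (l : ℝ) T ∈ Icc 0 T := fun l =>
    ⟨le_min l.cast_nonneg hT, min_le_right _ _⟩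
  rw [hγ _ (hmem k) _ (hmem (k + 1))]
  refine (abs_min_sub_min_le_max _ _ _ _).trans ?_
  simp

lemma GeodesicSpace.abs_sub_le_mul_dist_add_one (hgeo : GeodesicSpace X) {f : X → ℝ} {B : ℝ}
    (hf : ∀ x x', dist x x' ≤ 1 → |f x - f x'| ≤ B) (x y : X) :
    |f x - f y| ≤ B * (dist x y + 1) := by
  obtain ⟨γ, hγ, hγ0, hγT⟩ := hgeo x y
  set T := dist x y
  set N := ⌈T⌉₊
  have hB : 0 ≤ B := by simpa using hf x x (by simp)
  have hchain := dist_le_range_sum_of_dist_le (f := fun k : ℕ => f (γ (min k T)))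
    (d := fun _ => B) N fun {k} _ => hf _ _ (hγ.dist_min_succ_le dist_nonneg k)
  have hmin0 : min ((0 : ℕ) : ℝ) T = 0 := by rw [Nat.cast_zero]; exact min_eq_left dist_nonneg
  have hminN : min (N : ℝ) T = T := min_eq_right (Nat.le_ceil T)
  simp only [Real.dist_eq, hmin0, hminN, hγ0, hγT, Finset.sum_const, Finset.card_range,
    nsmul_eq_mul] at hchain
  have hN : (N : ℝ) < T + 1 := Nat.ceil_lt_add_one dist_nonneg
  nlinarith

lemma zpow_smul_cOrbit {Z : Type*} [MulAction G Z] (c : G) (o : Z) (i : ℤ) :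
    c ^ i • cOrbit c o = cOrbit c o := by
  rw [cOrbit, Set.smul_set_range]
  simp_rw [smul_smul, ← zpow_add]
  exact (add_left_surjective i).range_comp fun j => c ^ j • o

lemma zpow_smul_mem_cOrbit {Z : Type*} [MulAction G Z] (c : G) (o : Z) (j : ℤ) :
    c ^ j • o ∈ cOrbit c o := ⟨j, rfl⟩

lemma self_mem_cOrbit {Z : Type*} [MulAction G Z] (c : G) (o : Z) : o ∈ cOrbit c o :=
  ⟨0, by simp⟩

lemma mul_zpow_smul_mem_smul_cOrbit {Z : Type*} [MulAction G Z] (g c : G) (o : Z) (j : ℤ) :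
    (g * c ^ j) • o ∈ g • cOrbit c o := by
  rw [mul_smul]
  exact Set.smul_mem_smul_set (zpow_smul_mem_cOrbit c o j)

lemma mem_Ec_iff {c g : G} {o : X} :
    g ∈ Ec c o ↔ hausdorffEDist (g • cOrbit c o) (cOrbit c o) ≠ ⊤ := Iff.rfl

section IsometricAction

variable [IsIsometricSMul G X]

lemma dist_mul_smul_le (o : X) (g h : G) :
    dist o ((g * h) • o) ≤ dist o (g • o) + dist o (h • o) := by
  rw [mul_smul, ← dist_smul g o (h • o)]
  exact dist_triangle _ _ _

lemma dist_inv_mul_smul (o : X) (a g : G) : dist o ((a⁻¹ * g) • o) = dist (a • o) (g • o) := by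
  rw [← dist_smul a, mul_smul, smul_inv_smul]

lemma dist_zpow_smul_zpow_smul (c : G) (o : X) (s t : ℤ) :
    dist (c ^ s • o) (c ^ t • o) = dist o (c ^ (t - s) • o) := by
  rw [← dist_smul (c ^ s) o, smul_smul, ← zpow_add, add_sub_cancel]

lemma dist_pow_smul_le (c : G) (o : X) (n : ℕ) : dist o (c ^ n • o) ≤ n * dist o (c • o) := by
  have := dist_le_range_sum_of_dist_le (f := fun k : ℕ => c ^ k • o)
    (d := fun _ => dist o (c • o)) n fun {k} _ => by simp [pow_succ, mul_smul, dist_smul]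
  simpa using this

lemma hausdorffEDist_smul (g : G) (s t : Set X) :
    hausdorffEDist (g • s) (g • t) = hausdorffEDist s t := by
  simpa only [Set.image_smul] using hausdorffEDist_image (isometry_smul X g) (s := s) (t := t)

lemma hausdorffEDist_zpow_mul_zpow_smul_cOrbit (c g : G) (o : X) (a b : ℤ) :
    hausdorffEDist ((c ^ a * g * c ^ b) • cOrbit c o) (cOrbit c o) =
      hausdorffEDist (g • cOrbit c o) (cOrbit c o) := by
  rw [mul_smul, mul_smul, zpow_smul_cOrbit]
  nth_rw 2 [← zpow_smul_cOrbit c o a]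
  rw [hausdorffEDist_smul]

lemma zpow_mul_zpow_mem_Ec {c g : G} {o : X} (hg : g ∈ Ec c o) (a b : ℤ) :
    c ^ a * g * c ^ b ∈ Ec c o := by
  rwa [mem_Ec_iff, hausdorffEDist_zpow_mul_zpow_smul_cOrbit]

lemma hausdorffDist_zpow_mul_zpow_smul_cOrbit (c g : G) (o : X) (a b : ℤ) :
    hausdorffDist ((c ^ a * g * c ^ b) • cOrbit c o) (cOrbit c o) =
      hausdorffDist (g • cOrbit c o) (cOrbit c o) := by
  rw [hausdorffDist, hausdorffEDist_zpow_mul_zpow_smul_cOrbit, hausdorffDist]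

lemma mem_Ec_of_forall_exists_dist_le {c g : G} {o : X} {B B' : ℝ}
    (hg : ∀ i : ℤ, ∃ s : ℤ, dist ((g * c ^ i) • o) (c ^ s • o) ≤ B)
    (hg' : ∀ i : ℤ, ∃ s : ℤ, dist ((g⁻¹ * c ^ i) • o) (c ^ s • o) ≤ B') : g ∈ Ec c o := by
  refine mem_Ec_iff.2 (ne_top_of_le_ne_top ENNReal.ofReal_ne_top
    (hausdorffEDist_le_of_mem_edist (r := .ofReal (max B B')) ?_ ?_))
  · rintro _ ⟨_, ⟨i, rfl⟩, rfl⟩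
    obtain ⟨s, hs⟩ := hg i
    refine ⟨c ^ s • o, ⟨s, rfl⟩, ?_⟩
    rw [edist_dist]
    exact ENNReal.ofReal_le_ofReal (by simpa only [mul_smul] using hs.trans (le_max_left _ _))
  · rintro _ ⟨i, rfl⟩
    obtain ⟨s, hs⟩ := hg' i
    refine ⟨g • c ^ s • o, Set.smul_mem_smul_set ⟨s, rfl⟩, ?_⟩
    rw [edist_dist, ← dist_smul g⁻¹, inv_smul_smul]
    exact ENNReal.ofReal_le_ofReal (by simpa only [mul_smul] using hs.trans (le_max_right _ _))

end IsometricAction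

section ProperAction

variable {o : X}

lemma ProperAction.exists_zpow_smul_mem_proj (hproper : ProperAction G o) (c : G) (x : X) :
    ∃ j : ℤ, c ^ j • o ∈ proj (cOrbit c o) x := by
  obtain ⟨_, ⟨j, rfl⟩, hj⟩ := exists_mem_proj (Y := cOrbit c o) (x := x) ⟨o, 0, by simp⟩
    fun r => ((hproper x r).image (· • o)).subset <| by
      rintro _ ⟨⟨j, rfl⟩, hj⟩
      exact ⟨c ^ j, mem_closedBall'.1 hj, rfl⟩
  exact ⟨j, ⟨j, rfl⟩, hj⟩

variable [IsIsometricSMul G X]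

lemma ProperAction.exists_abs_sub_le (hproper : ProperAction G o) {c : G}
    (hc : ¬IsOfFinOrder c) (D : ℝ) :
    ∃ B : ℝ, ∀ s t : ℤ, dist (c ^ s • o) (c ^ t • o) ≤ D → |(s : ℝ) - t| ≤ B := by
  have hfin : {i : ℤ | dist o (c ^ i • o) ≤ D}.Finite :=
    (hproper o D).preimage (injective_zpow_iff_not_isOfFinOrder.2 hc).injOn
  obtain ⟨B, hB⟩ := (hfin.image fun i : ℤ => |(i : ℝ)|).bddAbove
  refine ⟨B, fun s t hst => ?_⟩
  rw [dist_zpow_smul_zpow_smul] at hst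
  rw [abs_sub_comm]
  exact_mod_cast hB ⟨t - s, hst, by push_cast; rfl⟩

lemma exists_abs_le_mul_dist_zpow_smul (hgeo : GeodesicSpace X) (hproper : ProperAction G o)
    {c : G} (hc : ¬IsOfFinOrder c) {C : ℝ} (hC : StronglyContractingWith C (cOrbit c o)) :
    ∃ P : ℝ, 0 < P ∧ ∀ i : ℤ, |(i : ℝ)| ≤ P * (dist o (c ^ i • o) + 3) := by
  choose ι hι using hproper.exists_zpow_smul_mem_proj c
  obtain ⟨B, hB⟩ := hproper.exists_abs_sub_le hc (C + 4)
  have hstep : ∀ x x', dist x x' ≤ 1 → |(ι x : ℝ) - ι x'| ≤ B := fun x x' h =>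
    hB _ _ (by linarith [hC.dist_le_add_of_mem_proj (hι x) (hι x')])
  have hend : ∀ j : ℤ, |(ι (c ^ j • o) : ℝ) - j| ≤ B := fun j => hB _ _ <| by
    rw [dist_comm, (hι _).2, infDist_zero_of_mem (zpow_smul_mem_cOrbit c o j)]
    linarith [hC.1]
  have hbound : ∀ i : ℤ, |(i : ℝ)| ≤ B * (dist o (c ^ i • o) + 3) := fun i => by
    have h0 := hend 0
    have hi := hend i
    have hmid := hgeo.abs_sub_le_mul_dist_add_one (f := fun x => (ι x : ℝ)) hstep
      (c ^ (0 : ℤ) • o) (c ^ i • o)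
    simp only [zpow_zero, one_smul, Int.cast_zero, sub_zero] at h0 hmid
    have := dist_triangle4 (0 : ℝ) (ι o) (ι (c ^ i • o)) i
    simp only [Real.dist_eq, zero_sub, abs_neg] at this
    linarith
  refine ⟨B, ?_, hbound⟩
  have h1 := hbound 1
  simp only [Int.cast_one, abs_one] at h1
  nlinarith [dist_nonneg (x := o) (y := c ^ (1 : ℤ) • o)]

end ProperAction

section ElementaryClosure

variable [IsIsometricSMul G X] {o : X}

/-- If the points `g c^{km}.o` all stayed `m|c|`-far from `⟨c⟩.o`, contraction would let their
projections advance by at most `C` per step, while by undistortedness the points themselves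
advance by about `m / P ≥ C + 1` per step; as both ends lie within `d_H(g⟨c⟩.o, ⟨c⟩.o)` of their
projections, this fails after enough steps. -/
lemma exists_infDist_mul_zpow_smul_le_of_mem_Ec (hproper : ProperAction G o) {c : G} {C P : ℝ}
    (hC : StronglyContractingWith C (cOrbit c o)) (hP0 : 0 < P)
    (hP : ∀ i : ℤ, |(i : ℝ)| ≤ P * (dist o (c ^ i • o) + 3)) :
    ∃ R : ℝ, ∀ g ∈ Ec c o, ∃ j : ℤ, infDist ((g * c ^ j) • o) (cOrbit c o) ≤ R := by
  set m := ⌈P * (C + 1)⌉₊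
  refine ⟨m * dist o (c • o), fun g hg => ?_⟩
  by_contra! hfar
  replace hfar : ∀ k : ℕ, m * dist o (c • o) < infDist ((g * c ^ k) • o) (cOrbit c o) :=
    fun k => by simpa only [zpow_natCast] using hfar k
  set K := hausdorffDist (g • cOrbit c o) (cOrbit c o)
  have hK : ∀ k : ℕ, infDist ((g * c ^ k) • o) (cOrbit c o) ≤ K := fun k => by
    simpa using infDist_le_hausdorffDist_of_mem (mul_zpow_smul_mem_smul_cOrbit g c o k) hg
  choose ι hι using hproper.exists_zpow_smul_mem_proj c
  set n := ⌈2 * K + 3⌉₊ + 1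
  set w : ℕ → X := fun k => (g * c ^ (k * m)) • o
  have hstep : ∀ k, dist (w k) (w (k + 1)) = dist o (c ^ m • o) := fun k => by
    simp only [w, add_mul, one_mul, pow_add, ← mul_assoc, mul_smul (g * c ^ (k * m)), dist_smul]
  have hchain := hC.dist_proj_le_of_chain (π := fun x => c ^ ι x • o) hι (x := w) (n := n)
    fun k _ => by
      rw [hstep]
      exact (dist_pow_smul_le c o m).trans (hfar (k * m)).le
  have hupper : dist o (c ^ (n * m) • o) ≤ 2 * K + n * C := by
    have h0 : infDist (w 0) (cOrbit c o) ≤ K := hK _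
    have hn : infDist (w n) (cOrbit c o) ≤ K := hK _
    have hw : dist (w 0) (w n) = dist o (c ^ (n * m) • o) := by
      simp only [w, zero_mul, pow_zero, mul_smul, dist_smul, one_smul]
    have := dist_triangle4 (w 0) (c ^ ι (w 0) • o) (c ^ ι (w n) • o) (w n)
    rw [dist_comm (c ^ ι (w n) • o), (hι _).2, (hι _).2, hw] at this
    linarith
  have hlower : (n * m : ℝ) ≤ P * (dist o (c ^ (n * m) • o) + 3) := by
    have := hP (n * m : ℕ)
    rwa [zpow_natCast, Int.cast_natCast, abs_of_nonneg (Nat.cast_nonneg _), Nat.cast_mul] at this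
  have hm : P * (C + 1) ≤ m := Nat.le_ceil _
  have hn : 2 * K + 3 < n := by
    simp only [n, Nat.cast_add, Nat.cast_one]; linarith [Nat.le_ceil (2 * K + 3)]
  nlinarith

/-- Multiplying `g` on both sides by powers of `c` does not change `d_H(g⟨c⟩.o, ⟨c⟩.o)` and, by
`hR`, brings `g` into a fixed finite ball; so these Hausdorff distances are uniformly bounded. -/
lemma exists_dist_zpow_smul_le_of_mem_Ec (hproper : ProperAction G o) {c : G} {R : ℝ}
    (hR : ∀ g ∈ Ec c o, ∃ j : ℤ, infDist ((g * c ^ j) • o) (cOrbit c o) ≤ R) :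
    ∃ K : ℝ, ∀ g ∈ Ec c o, ∃ s : ℤ, dist (g • o) (c ^ s • o) ≤ K := by
  have hL : (cOrbit c o).Nonempty := ⟨o, self_mem_cOrbit c o⟩
  set F := {f : G | dist o (f • o) ≤ R + 1} ∩ Ec c o
  obtain ⟨K, hK⟩ := (((hproper o (R + 1)).subset inter_subset_left).image
    fun f => hausdorffDist (f • cOrbit c o) (cOrbit c o)).bddAbove
  refine ⟨K + 1, fun g hg => ?_⟩
  obtain ⟨j, hj⟩ := hR g hg
  obtain ⟨_, ⟨s, rfl⟩, hs⟩ := (infDist_lt_iff hL).1 (hj.trans_lt (lt_add_one R))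
  have hf : c ^ (-s) * g * c ^ j ∈ F := by
    refine ⟨?_, zpow_mul_zpow_mem_Ec hg _ _⟩
    show dist o ((c ^ (-s) * g * c ^ j) • o) ≤ R + 1
    rw [zpow_neg, mul_assoc, dist_inv_mul_smul, dist_comm]
    exact hs.le
  have hgK : hausdorffDist (g • cOrbit c o) (cOrbit c o) ≤ K := by
    rw [← hausdorffDist_zpow_mul_zpow_smul_cOrbit c g o (-s) j]
    exact hK ⟨_, hf, rfl⟩
  obtain ⟨_, ⟨t, rfl⟩, ht⟩ := (infDist_lt_iff hL).1 <|
    (infDist_le_hausdorffDist_of_mem (Set.smul_mem_smul_set (self_mem_cOrbit c o)) hg).trans_lt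
      (hgK.trans_lt (lt_add_one K))
  exact ⟨t, ht.le⟩

lemma exists_pow_mem_of_infinite (hproper : ProperAction G o) {c : G} {N : Subgroup G}
    (hN : (N : Set G).Infinite) {K : ℝ} (hK : ∀ n ∈ N, ∃ s : ℤ, dist (n • o) (c ^ s • o) ≤ K) :
    ∃ k : ℕ, 0 < k ∧ c ^ k ∈ N := by
  choose s hs using fun n : N => hK n n.2
  have : Infinite N := hN.to_subtype
  have : Finite {h : G | dist o (h • o) ≤ K} := (hproper o K).to_subtype
  obtain ⟨n₁, n₂, hne, heq⟩ := Finite.exists_ne_map_eq_of_infinite fun n : N =>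
    (⟨(c ^ s n)⁻¹ * n, by simpa [dist_inv_mul_smul, dist_comm] using hs n⟩ :
      {h : G | dist o (h • o) ≤ K})
  have hdiff : (n₁ : G) * (n₂ : G)⁻¹ = c ^ (s n₁ - s n₂) := by
    have heq' : (c ^ s n₁)⁻¹ * n₁ = (c ^ s n₂)⁻¹ * n₂ := congrArg Subtype.val heq
    calc (n₁ : G) * (n₂ : G)⁻¹ = c ^ s n₁ * ((c ^ s n₁)⁻¹ * n₁) * (n₂ : G)⁻¹ := by group
      _ = c ^ s n₁ * ((c ^ s n₂)⁻¹ * n₂) * (n₂ : G)⁻¹ := by rw [heq']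
      _ = c ^ (s n₁ - s n₂) := by group
  have hs12 : s n₁ - s n₂ ≠ 0 := fun h => hne <| Subtype.ext <| by
    rwa [h, zpow_zero, mul_inv_eq_one] at hdiff
  have hmem : c ^ (s n₁ - s n₂) ∈ N := hdiff ▸ N.mul_mem n₁.2 (N.inv_mem n₂.2)
  refine ⟨(s n₁ - s n₂).natAbs, Int.natAbs_pos.2 hs12, ?_⟩
  have := N.zpow_mem hmem (s n₁ - s n₂).sign
  rwa [← zpow_mul, Int.mul_sign_self, zpow_natCast] at this

lemma exists_dist_mul_zpow_smul_le_of_normal {N : Subgroup G} (hN : N.Normal) {c : G}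
    {k : ℕ} (hk0 : 0 < k) (hk : c ^ k ∈ N) {K : ℝ}
    (hK : ∀ n ∈ N, ∃ s : ℤ, dist (n • o) (c ^ s • o) ≤ K) (g : G) (i : ℤ) :
    ∃ s : ℤ, dist ((g * c ^ i) • o) (c ^ s • o) ≤ K + dist o (g • o) + k * dist o (c • o) := by
  set r := (i % k).toNat
  have hr : (r : ℤ) = i % k := Int.toNat_of_nonneg (Int.emod_nonneg _ (by omega))
  have hrk : r ≤ k := by have := Int.emod_lt_of_pos i (b := k) (by omega); omega
  set n := g * c ^ ((k : ℤ) * (i / k)) * g⁻¹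
  have hn : n ∈ N := hN.conj_mem _ (by rw [zpow_mul, zpow_natCast]; exact N.zpow_mem hk _) g
  have hgi : g * c ^ i = n * (g * c ^ r) := by
    rw [← zpow_natCast, hr]
    conv_lhs => rw [← Int.mul_ediv_add_emod i k, zpow_add]
    simp only [n]
    group
  obtain ⟨s, hs⟩ := hK n hn
  refine ⟨s, ?_⟩
  calc dist ((g * c ^ i) • o) (c ^ s • o)
        ≤ dist ((g * c ^ i) • o) (n • o) + dist (n • o) (c ^ s • o) := dist_triangle _ _ _
    _ ≤ dist o ((g * c ^ r) • o) + K := by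
        rw [hgi, mul_smul, dist_smul, dist_comm]
        linarith
    _ ≤ dist o (g • o) + r * dist o (c • o) + K := by
        linarith [dist_mul_smul_le o g (c ^ r), dist_pow_smul_le c o r]
    _ ≤ K + dist o (g • o) + k * dist o (c • o) := by
        have : (r : ℝ) ≤ k := by exact_mod_cast hrk
        nlinarith [dist_nonneg (x := o) (y := c • o)]

end ElementaryClosure

section Growth

variable {o : X}

lemma exists_ncard_le_linear [IsIsometricSMul G X] (hproper : ProperAction G o) {c : G}
    {P K : ℝ} (hP0 : 0 < P) (hP : ∀ i : ℤ, |(i : ℝ)| ≤ P * (dist o (c ^ i • o) + 3))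
    (hK : ∀ g : G, ∃ s : ℤ, dist (g • o) (c ^ s • o) ≤ K) :
    ∃ a b : ℝ, ∀ r : ℝ, 0 ≤ r → ({g : G | dist o (g • o) ≤ r}.ncard : ℝ) ≤ a * r + b := by
  have hK0 : 0 ≤ K := by obtain ⟨s, hs⟩ := hK 1; exact dist_nonneg.trans hs
  set B := {h : G | dist o (h • o) ≤ K}
  refine ⟨2 * P * B.ncard, (2 * P * (K + 3) + 3) * B.ncard, fun r hr => ?_⟩
  set M := ⌈P * (r + K + 3)⌉₊
  have hsub : {g : G | dist o (g • o) ≤ r} ⊆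
      (fun p : ℤ × G => c ^ p.1 * p.2) '' (Icc (-M : ℤ) M ×ˢ B) := by
    intro g hg
    obtain ⟨s, hs⟩ := hK g
    have hcs : dist o (c ^ s • o) ≤ r + K := (dist_triangle _ _ _).trans (add_le_add hg hs)
    have hsM : |(s : ℝ)| ≤ M :=
      (hP s).trans ((mul_le_mul_of_nonneg_left (by linarith) hP0.le).trans (Nat.le_ceil _))
    refine ⟨(s, (c ^ s)⁻¹ * g), ⟨abs_le.1 ?_, ?_⟩, mul_inv_cancel_left _ _⟩
    · exact_mod_cast hsM
    · show dist o (((c ^ s)⁻¹ * g) • o) ≤ K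
      rw [dist_inv_mul_smul, dist_comm]
      exact hs
  have hM : (M : ℝ) < P * (r + K + 3) + 1 := Nat.ceil_lt_add_one (by positivity)
  have hIcc : (Icc (-M : ℤ) M).ncard = 2 * M + 1 := by
    rw [← Finset.coe_Icc, ncard_coe_finset, Int.card_Icc]
    omega
  calc ({g : G | dist o (g • o) ≤ r}.ncard : ℝ)
      ≤ (Icc (-M : ℤ) M ×ˢ B).ncard := by
        exact_mod_cast (ncard_le_ncard hsub (((finite_Icc _ _).prod (hproper o K)).image _)).trans
          (ncard_image_le ((finite_Icc _ _).prod (hproper o K)))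
    _ = (2 * M + 1) * B.ncard := by rw [ncard_prod, hIcc]; push_cast; ring
    _ ≤ (2 * (P * (r + K + 3) + 1) + 1) * B.ncard := by gcongr
    _ = 2 * P * B.ncard * r + (2 * P * (K + 3) + 3) * B.ncard := by ring

lemma PurelyExponentialWith.not_ncard_le_linear {δ Δ A : ℝ}
    (hPE : PurelyExponentialWith G o δ Δ A) (hproper : ProperAction G o) (a b : ℝ) :
    ¬ ∀ r : ℝ, 0 ≤ r → ({g : G | dist o (g • o) ≤ r}.ncard : ℝ) ≤ a * r + b := by
  obtain ⟨hδ, hΔ, hA, hshell⟩ := hPE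
  intro hlin
  have hlo : (fun r => A * (a * r + (a * Δ + b))) =o[atTop] fun r => Real.exp (δ * r) := by
    have h1 := isLittleO_pow_exp_pos_mul_atTop 1 hδ
    have h0 := isLittleO_pow_exp_pos_mul_atTop 0 hδ
    simpa using ((h1.const_mul_left a).add (h0.const_mul_left (a * Δ + b))).const_mul_left A
  obtain ⟨r, hr, hr0⟩ :=
    ((hlo.def (by norm_num : (0 : ℝ) < 1 / 2)).and (eventually_ge_atTop 0)).exists
  have hcount : Real.exp (δ * r) / A ≤ a * (r + Δ) + b := by
    refine (hshell r hr0).1.trans ((Nat.cast_le.2 (ncard_le_ncard ?_ (hproper o (r + Δ)))).trans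
      (hlin _ (by linarith)))
    exact fun g hg => hg.2
  rw [Real.norm_eq_abs, Real.norm_eq_abs, abs_of_pos (Real.exp_pos _)] at hr
  rw [div_le_iff₀ (by linarith)] at hcount
  nlinarith [le_abs_self (A * (a * r + (a * Δ + b))), Real.exp_pos (δ * r)]

end Growth

/-- **Lemma.** If `G` acts properly with a strongly contracting element `c'` and has purely
exponential growth, then every infinite normal subgroup of `G` contains an element that is
not in `E(c')`. -/
theorem normal_subgroup_not_in_elementary_closure
    {G : Type*} [Group G] {X : Type*} [MetricSpace X]
    [MulAction G X] [IsIsometricSMul G X] (o : X)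
    (hgeo : GeodesicSpace X)
    (hproper : ProperAction G o)
    (c' : G) (hc' : IsStronglyContractingElement c' o)
    (hPE : PurelyExponential G o) :
    ∀ N : Subgroup G, N.Normal → (N : Set G).Infinite →
      ∃ n ∈ N, n ∉ Ec c' o := by
  intro N hN hNinf
  by_contra! hNE
  obtain ⟨hc, C, hC⟩ := hc'
  obtain ⟨P, hP0, hP⟩ := exists_abs_le_mul_dist_zpow_smul hgeo hproper hc hC
  obtain ⟨R, hR⟩ := exists_infDist_mul_zpow_smul_le_of_mem_Ec hproper hC hP0 hP
  obtain ⟨K, hK⟩ := exists_dist_zpow_smul_le_of_mem_Ec hproper hR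
  obtain ⟨k, hk0, hk⟩ :=
    exists_pow_mem_of_infinite hproper hNinf fun n hn => hK n (hNE n hn)
  have hnear := exists_dist_mul_zpow_smul_le_of_normal hN hk0 hk fun n hn => hK n (hNE n hn)
  have hEc : ∀ g, g ∈ Ec c' o := fun g => mem_Ec_of_forall_exists_dist_le (hnear g) (hnear g⁻¹)
  obtain ⟨a, b, hab⟩ := exists_ncard_le_linear hproper hP0 hP fun g => hK g (hEc g)
  obtain ⟨δ, Δ, A, hPE⟩ := hPE
  exact hPE.not_ncard_le_linear hproper a b hab

end ACcogrowth
end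

section
/- Let G act properly by isometries on a metric space X with basepoint o, and suppose G has purely exponential growth with rate δ > 0 and shell width Δ. Let B ⊆ X, let M ∈ ℕ, a ∈ ℝ, E ≥ 0, and let φ : G → B be a surjection such that #φ⁻¹(b) ≤ M for every b ∈ B and |d(o, φ(g)) − (2|g| + a)| ≤ E for every g ∈ G. Then B has purely exponential growth with rate δ/2: there exist Δ' > 0 and A ≥ 1 such that exp(tδ/2)/A ≤ #{b ∈ B : t < d(o,b) ≤ t + Δ'} ≤ A·exp(tδ/2) for all sufficiently large t. In particular, δ_B := limsup_{r→∞} (log #{b ∈ B : d(o,b) ≤ r})/r equals δ/2, and B is divergent: Σ_{b∈B} exp(−(δ/2)·d(o,b)) = ∞. -/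
open Metric Set Filter Pointwise

namespace ACcogrowth

variable {X : Type*} [MetricSpace X]

variable {G : Type*} [Group G] [MulAction G X]

/-!
Write `|g| = d(o, g.o)`. Since `d(o, φ g) ≈ 2|g| + a`, the map `φ` sends the shell
`r < |g| ≤ r + Δ` of `G`, at most `M`-to-one, into the shell of `B` of width `2Δ + 2E` at radius
`2r + a - E`; conversely a ball of radius `t` in `B` is covered by the image of the ball of radius
`(t - a + E)/2` in `G`, whose size is a geometric sum of shells, hence `O(exp (δ t / 2))`. So the
shells of `B` have size comparable to `exp (δ t / 2)`. Comparing balls with shells gives the growth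
rate, and the Poincaré series at `δ/2` diverges because, however far out, a shell contributes a
fixed positive amount to it.
-/

section Growth

open Real Topology

variable {α β : Type*}

theorem ncard_le_mul_ncard_of_mapsTo {f : α → β} {s : Set α} {t : Set β} (hs : s.Finite)
    (ht : t.Finite) (hf : MapsTo f s t) (n : ℕ) (hn : ∀ b ∈ t, {a ∈ s | f a = b}.ncard ≤ n) :
    s.ncard ≤ n * t.ncard := by
  classical
  rw [Set.ncard_eq_toFinset_card s hs, Set.ncard_eq_toFinset_card t ht]
  refine Finset.card_le_mul_card_image_of_maps_to (f := f) (fun a ha => ?_) n (fun b hb => ?_)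
  · simpa using hf (by simpa using ha)
  · rw [← Set.ncard_coe_finset]
    simpa using hn b (by simpa using hb)

theorem tendsto_log_div_of_exp_bounds {f : ℝ → ℝ} {c₁ c₂ κ : ℝ} (hc₁ : 0 < c₁) (hc₂ : 0 < c₂)
    (hf : ∀ᶠ r in atTop, c₁ * exp (κ * r) ≤ f r ∧ f r ≤ c₂ * exp (κ * r)) :
    Tendsto (fun r => log (f r) / r) atTop (𝓝 κ) := by
  have hlim : ∀ c, Tendsto (fun r => (log c + κ * r) / r) atTop (𝓝 κ) := fun c => by
    have h := ((tendsto_const_nhds (x := log c)).div_atTop tendsto_id).add_const κ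
    rw [zero_add] at h
    refine h.congr' ?_
    filter_upwards [eventually_gt_atTop 0] with r hr
    simp only [id]
    field_simp
  refine tendsto_of_tendsto_of_tendsto_of_le_of_le' (hlim c₁) (hlim c₂) ?_ ?_ <;>
    filter_upwards [hf, eventually_gt_atTop 0] with r ⟨h₁, h₂⟩ hr <;>
    refine div_le_div_of_nonneg_right ?_ hr.le
  · simpa [log_mul hc₁.ne', log_exp] using log_le_log (mul_pos hc₁ (exp_pos _)) h₁
  · simpa [log_mul hc₂.ne', log_exp] using log_le_log ((mul_pos hc₁ (exp_pos _)).trans_le h₁) h₂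

theorem le_mul_pow_of_le_add_mul_pow {u : ℕ → ℝ} {b q C : ℝ} (hq : 0 ≤ q) (h₀ : u 0 ≤ C)
    (hb : b ≤ C * (q - 1)) (hstep : ∀ n, u (n + 1) ≤ u n + b * q ^ n) (n : ℕ) :
    u n ≤ C * q ^ n := by
  induction n with
  | zero => simpa using h₀
  | succ n ih =>
    calc u (n + 1) ≤ u n + b * q ^ n := hstep n
      _ ≤ C * q ^ n + C * (q - 1) * q ^ n := by gcongr
      _ = C * q ^ (n + 1) := by ring

section LengthFunction

variable {ℓ : α → ℝ} {S : Set α}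

theorem ncard_sublevel_add_le (hfin : ∀ r, {x ∈ S | ℓ x ≤ r}.Finite) (t Δ : ℝ) :
    {x ∈ S | ℓ x ≤ t + Δ}.ncard ≤
      {x ∈ S | ℓ x ≤ t}.ncard + {x ∈ S | t < ℓ x ∧ ℓ x ≤ t + Δ}.ncard := by
  refine (Set.ncard_le_ncard (fun x hx => ?_) ((hfin t).union ((hfin (t + Δ)).subset
    fun x hx => ⟨hx.1, hx.2.2⟩))).trans (Set.ncard_union_le _ _)
  by_cases h : ℓ x ≤ t
  · exact Or.inl ⟨hx.1, h⟩
  · exact Or.inr ⟨hx.1, not_le.1 h, hx.2⟩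

theorem exists_ncard_sublevel_le_of_shell_le {δ Δ A T : ℝ} (hδ : 0 < δ) (hΔ : 0 < Δ)
    (hfin : ∀ r, {x ∈ S | ℓ x ≤ r}.Finite)
    (hup : ∀ t ≥ T, ({x ∈ S | t < ℓ x ∧ ℓ x ≤ t + Δ}.ncard : ℝ) ≤ A * exp (δ * t)) :
    ∃ C, 0 < C ∧ ∀ r ≥ T, ({x ∈ S | ℓ x ≤ r}.ncard : ℝ) ≤ C * exp (δ * r) := by
  set N : ℝ → ℝ := fun r => ({x ∈ S | ℓ x ≤ r}.ncard : ℝ)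
  have hA : 0 ≤ A :=
    nonneg_of_mul_nonneg_left ((Nat.cast_nonneg _).trans (hup T le_rfl)) (exp_pos _)
  set q := exp (δ * Δ)
  have hq : 0 < q - 1 := sub_pos.2 (one_lt_exp_iff.2 (by positivity))
  set C₀ := N T + A * exp (δ * T) / (q - 1) + 1
  have hgrid : ∀ n : ℕ, N (T + n * Δ) ≤ C₀ * q ^ n := by
    refine le_mul_pow_of_le_add_mul_pow (b := A * exp (δ * T)) (exp_pos _).le ?_ ?_ fun n => ?_
    · simp only [CharP.cast_eq_zero, zero_mul, add_zero, C₀]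
      linarith [div_nonneg (mul_nonneg hA (exp_pos (δ * T)).le) hq.le]
    · rw [add_mul, add_mul, div_mul_cancel₀ _ hq.ne']
      nlinarith [(Nat.cast_nonneg _ : (0 : ℝ) ≤ {x ∈ S | ℓ x ≤ T}.ncard)]
    · have hexp : A * exp (δ * T) * q ^ n = A * exp (δ * (T + n * Δ)) := by
        rw [mul_assoc, ← exp_nat_mul, ← exp_add]; ring_nf
      show N (T + ((n + 1 : ℕ) : ℝ) * Δ) ≤ N (T + n * Δ) + A * exp (δ * T) * q ^ n
      rw [hexp, show T + ((n + 1 : ℕ) : ℝ) * Δ = T + n * Δ + Δ by push_cast; ring]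
      refine (Nat.cast_le.2 (ncard_sublevel_add_le hfin (T + n * Δ) Δ)).trans ?_
      push_cast
      gcongr
      exact hup _ (le_add_of_nonneg_right (by positivity))
  refine ⟨C₀ * exp (δ * (Δ - T)), by positivity, fun r hr => ?_⟩
  set n := ⌈(r - T) / Δ⌉₊
  have hn : r - T ≤ n * Δ := (div_le_iff₀ hΔ).1 (Nat.le_ceil _)
  have hn' : (n : ℝ) * Δ ≤ r - T + Δ := by
    have := Nat.ceil_lt_add_one (div_nonneg (sub_nonneg.2 hr) hΔ.le)
    nlinarith [(div_mul_cancel₀ (r - T) hΔ.ne')]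
  calc N r ≤ N (T + n * Δ) :=
        Nat.cast_le.2 (Set.ncard_le_ncard (fun x hx => ⟨hx.1, by linarith [hx.2]⟩) (hfin _))
    _ ≤ C₀ * q ^ n := hgrid n
    _ = C₀ * exp (δ * (n * Δ)) := by rw [← exp_nat_mul]; ring_nf
    _ ≤ C₀ * exp (δ * (r - T + Δ)) := by gcongr
    _ = C₀ * exp (δ * (Δ - T)) * exp (δ * r) := by rw [mul_assoc, ← exp_add]; ring_nf

theorem tendsto_log_ncard_sublevel_div_of_shell_bounds {κ Δ A T : ℝ} (hκ : 0 < κ) (hΔ : 0 < Δ)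
    (hA : 0 < A) (hfin : ∀ r, {x ∈ S | ℓ x ≤ r}.Finite)
    (hshell : ∀ t ≥ T, exp (κ * t) / A ≤ ({x ∈ S | t < ℓ x ∧ ℓ x ≤ t + Δ}.ncard : ℝ) ∧
      ({x ∈ S | t < ℓ x ∧ ℓ x ≤ t + Δ}.ncard : ℝ) ≤ A * exp (κ * t)) :
    Tendsto (fun r => log ({x ∈ S | ℓ x ≤ r}.ncard : ℝ) / r) atTop (𝓝 κ) := by
  obtain ⟨C, hC, hup⟩ :=
    exists_ncard_sublevel_le_of_shell_le hκ hΔ hfin fun t ht => (hshell t ht).2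
  refine tendsto_log_div_of_exp_bounds (c₁ := exp (-(κ * Δ)) / A) (by positivity) hC ?_
  filter_upwards [eventually_ge_atTop (T + Δ)] with r hr
  refine ⟨?_, hup r (by linarith)⟩
  calc exp (-(κ * Δ)) / A * exp (κ * r) = exp (κ * (r - Δ)) / A := by
        rw [div_mul_eq_mul_div, ← exp_add]; ring_nf
    _ ≤ {x ∈ S | r - Δ < ℓ x ∧ ℓ x ≤ r - Δ + Δ}.ncard := (hshell _ (by linarith)).1
    _ ≤ {x ∈ S | ℓ x ≤ r}.ncard := Nat.cast_le.2 <|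
        Set.ncard_le_ncard (fun x hx => ⟨hx.1, by linarith [hx.2.2]⟩) (hfin r)

theorem not_summable_exp_neg_of_shell_ge {κ Δ A T : ℝ} (hκ : 0 ≤ κ) (hA : 0 < A)
    (hfin : ∀ r, {x ∈ S | ℓ x ≤ r}.Finite)
    (hshell : ∀ t ≥ T, exp (κ * t) / A ≤ ({x ∈ S | t < ℓ x ∧ ℓ x ≤ t + Δ}.ncard : ℝ)) :
    ¬ Summable fun x : S => exp (-κ * ℓ x) := by
  intro hsum
  set c := exp (-(κ * Δ)) / A
  obtain ⟨s, hs⟩ := summable_iff_vanishing.1 hsum (Iio c) (Iio_mem_nhds (by positivity))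
  obtain ⟨R, hR⟩ := (s.finite_toSet.image fun x : S => ℓ x).bddAbove
  set t := max T R
  have hshell_fin : (Subtype.val ⁻¹' {x ∈ S | t < ℓ x ∧ ℓ x ≤ t + Δ} : Set S).Finite :=
    ((hfin (t + Δ)).subset fun x hx => ⟨hx.1, hx.2.2⟩).preimage Subtype.val_injective.injOn
  set F := hshell_fin.toFinset
  have hF_card : (F.card : ℝ) = {x ∈ S | t < ℓ x ∧ ℓ x ≤ t + Δ}.ncard := by
    rw [← Set.ncard_eq_toFinset_card _ hshell_fin,
      Set.ncard_preimage_of_injective_subset_range Subtype.val_injective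
        (by rw [Subtype.range_coe]; exact fun x hx => hx.1)]
  -- Far enough out, a whole shell avoids `s` and still contributes at least `c` to the series.
  have hdisj : Disjoint F s := Finset.disjoint_left.2 fun x hxF hxs => by
    have := hR (Set.mem_image_of_mem _ hxs)
    simp only [F, Set.Finite.mem_toFinset, Set.mem_preimage, Set.mem_ofPred_eq] at hxF
    linarith [le_max_right T R, hxF.2.1]
  refine (Set.mem_Iio.1 (hs F hdisj)).not_ge ?_
  calc c = exp (κ * t) / A * exp (-κ * (t + Δ)) := by
        simp only [c]; rw [div_mul_eq_mul_div, ← exp_add]; ring_nf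
    _ ≤ F.card * exp (-κ * (t + Δ)) := by
        rw [hF_card]; gcongr; exact hshell t (le_max_left T R)
    _ ≤ ∑ x ∈ F, exp (-κ * ℓ x) := by
        rw [← nsmul_eq_mul]
        refine Finset.card_nsmul_le_sum _ _ _ fun x hx => exp_le_exp.2 ?_
        simp only [F, Set.Finite.mem_toFinset, Set.mem_preimage, Set.mem_ofPred_eq] at hx
        nlinarith [hx.2.2]

end LengthFunction

section CoarselyAffine

variable {ℓ : α → ℝ} {ℓ' : β → ℝ} {φ : α → β} {S : Set β} {k a E : ℝ}

theorem finite_fiber_of_coarselyAffine (hk : 0 < k) (hfin : ∀ r, {x | ℓ x ≤ r}.Finite)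
    (hφ : ∀ x, |ℓ' (φ x) - (k * ℓ x + a)| ≤ E) (y : β) : {x | φ x = y}.Finite :=
  (hfin ((ℓ' y - a + E) / k)).subset fun x (hx : φ x = y) => by
    rw [Set.mem_ofPred_eq, le_div_iff₀ hk, ← hx]
    linarith [(abs_le.1 (hφ x)).1]

theorem sublevel_subset_image_of_coarselyAffine (hk : 0 < k) (hsurj : ∀ y ∈ S, ∃ x, φ x = y)
    (hφ : ∀ x, |ℓ' (φ x) - (k * ℓ x + a)| ≤ E) (r : ℝ) :
    {y ∈ S | ℓ' y ≤ r} ⊆ φ '' {x | ℓ x ≤ (r - a + E) / k} := by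
  rintro y ⟨hyS, hy⟩
  obtain ⟨x, rfl⟩ := hsurj y hyS
  refine ⟨x, ?_, rfl⟩
  rw [Set.mem_ofPred_eq, le_div_iff₀ hk]
  linarith [(abs_le.1 (hφ x)).1]

theorem mapsTo_shell_of_coarselyAffine (hk : 0 < k) (hφS : ∀ x, φ x ∈ S)
    (hφ : ∀ x, |ℓ' (φ x) - (k * ℓ x + a)| ≤ E) (t Δ : ℝ) :
    MapsTo φ {x | (t - a + E) / k < ℓ x ∧ ℓ x ≤ (t - a + E) / k + Δ}
      {y ∈ S | t < ℓ' y ∧ ℓ' y ≤ t + (k * Δ + 2 * E)} := by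
  rintro x ⟨hx₁, hx₂⟩
  rw [div_lt_iff₀ hk] at hx₁
  have hx₂' : k * ℓ x ≤ t - a + E + k * Δ := by
    have := mul_le_mul_of_nonneg_left hx₂ hk.le
    rwa [mul_add, mul_div_cancel₀ _ hk.ne'] at this
  have := abs_le.1 (hφ x)
  exact ⟨hφS x, by linarith, by linarith⟩

theorem finite_sublevel_of_coarselyAffine (hk : 0 < k) (hfin : ∀ r, {x | ℓ x ≤ r}.Finite)
    (hsurj : ∀ y ∈ S, ∃ x, φ x = y) (hφ : ∀ x, |ℓ' (φ x) - (k * ℓ x + a)| ≤ E) (r : ℝ) :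
    {y ∈ S | ℓ' y ≤ r}.Finite :=
  ((hfin _).image φ).subset (sublevel_subset_image_of_coarselyAffine hk hsurj hφ r)

theorem exp_le_mul_ncard_shell_of_coarselyAffine {δ Δ A₀ : ℝ} {M : ℕ} (hk : 0 < k)
    (hA₀ : 0 < A₀) (hfin : ∀ r, {x | ℓ x ≤ r}.Finite)
    (hlow : ∀ r : ℝ, 0 ≤ r → exp (δ * r) / A₀ ≤ ({x | r < ℓ x ∧ ℓ x ≤ r + Δ}.ncard : ℝ))
    (hφS : ∀ x, φ x ∈ S) (hsurj : ∀ y ∈ S, ∃ x, φ x = y) (hfib : ∀ y, {x | φ x = y}.ncard ≤ M)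
    (hφ : ∀ x, |ℓ' (φ x) - (k * ℓ x + a)| ≤ E) {t : ℝ} (ht : a - E ≤ t) :
    exp (δ / k * t) ≤ A₀ * M * exp (δ / k * (a - E)) *
      {y ∈ S | t < ℓ' y ∧ ℓ' y ≤ t + (k * Δ + 2 * E)}.ncard := by
  set r := (t - a + E) / k
  have hcount : {x | r < ℓ x ∧ ℓ x ≤ r + Δ}.ncard ≤
      M * {y ∈ S | t < ℓ' y ∧ ℓ' y ≤ t + (k * Δ + 2 * E)}.ncard :=
    ncard_le_mul_ncard_of_mapsTo ((hfin _).subset fun x hx => hx.2)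
      ((finite_sublevel_of_coarselyAffine hk hfin hsurj hφ _).subset fun y hy => ⟨hy.1, hy.2.2⟩)
      (mapsTo_shell_of_coarselyAffine hk hφS hφ t Δ) M fun y _ =>
        (Set.ncard_le_ncard (fun x hx => hx.2) (finite_fiber_of_coarselyAffine hk hfin hφ y)).trans
          (hfib y)
  calc exp (δ / k * t) = exp (δ * r) * exp (δ / k * (a - E)) := by
        rw [← exp_add]; congr 1; simp only [r]; field_simp; ring
    _ ≤ A₀ * {x | r < ℓ x ∧ ℓ x ≤ r + Δ}.ncard * exp (δ / k * (a - E)) := by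
        gcongr
        exact (div_le_iff₀' hA₀).1 (hlow r (div_nonneg (by linarith) hk.le))
    _ ≤ A₀ * (M * {y ∈ S | t < ℓ' y ∧ ℓ' y ≤ t + (k * Δ + 2 * E)}.ncard) *
          exp (δ / k * (a - E)) := by
        gcongr; exact_mod_cast hcount
    _ = _ := by ring

theorem exists_ncard_shell_le_of_coarselyAffine {δ Δ A₀ : ℝ} (hk : 0 < k) (hE : 0 ≤ E)
    (hδ : 0 < δ) (hΔ : 0 < Δ) (hfin : ∀ r, {x | ℓ x ≤ r}.Finite)
    (hup : ∀ r : ℝ, 0 ≤ r → ({x | r < ℓ x ∧ ℓ x ≤ r + Δ}.ncard : ℝ) ≤ A₀ * exp (δ * r))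
    (hsurj : ∀ y ∈ S, ∃ x, φ x = y) (hφ : ∀ x, |ℓ' (φ x) - (k * ℓ x + a)| ≤ E) :
    ∃ U, ∀ t ≥ a - E,
      ({y ∈ S | t < ℓ' y ∧ ℓ' y ≤ t + (k * Δ + 2 * E)}.ncard : ℝ) ≤ U * exp (δ / k * t) := by
  obtain ⟨C, -, hball⟩ := exists_ncard_sublevel_le_of_shell_le (S := Set.univ) (T := 0) hδ hΔ
    (by simpa only [Set.sep_univ] using hfin) (by simpa only [Set.sep_univ] using hup)
  simp only [Set.sep_univ] at hball
  set Δ' := k * Δ + 2 * E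
  refine ⟨C * exp (δ / k * (Δ' - a + E)), fun t ht => ?_⟩
  set r := (t + Δ' - a + E) / k
  have hcount : {y ∈ S | t < ℓ' y ∧ ℓ' y ≤ t + Δ'}.ncard ≤ {x | ℓ x ≤ r}.ncard :=
    calc _ ≤ {y ∈ S | ℓ' y ≤ t + Δ'}.ncard :=
          Set.ncard_le_ncard (fun y hy => ⟨hy.1, hy.2.2⟩)
            (finite_sublevel_of_coarselyAffine hk hfin hsurj hφ _)
      _ ≤ (φ '' {x | ℓ x ≤ r}).ncard :=
          Set.ncard_le_ncard (sublevel_subset_image_of_coarselyAffine hk hsurj hφ _)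
            ((hfin _).image φ)
      _ ≤ _ := Set.ncard_image_le (hfin _)
  calc ({y ∈ S | t < ℓ' y ∧ ℓ' y ≤ t + Δ'}.ncard : ℝ) ≤ C * exp (δ * r) :=
        (Nat.cast_le.2 hcount).trans (hball r (div_nonneg (by linarith [mul_pos hk hΔ]) hk.le))
    _ = C * exp (δ / k * (Δ' - a + E)) * exp (δ / k * t) := by
        rw [mul_assoc, ← exp_add]; congr 2; simp only [r]; field_simp; ring

theorem exists_shell_bounds_of_coarselyAffine {δ Δ A₀ : ℝ} {M : ℕ} (hk : 0 < k) (hE : 0 ≤ E)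
    (hδ : 0 < δ) (hΔ : 0 < Δ) (hA₀ : 0 < A₀) (hfin : ∀ r, {x | ℓ x ≤ r}.Finite)
    (hshell : ∀ r : ℝ, 0 ≤ r →
      exp (δ * r) / A₀ ≤ ({x | r < ℓ x ∧ ℓ x ≤ r + Δ}.ncard : ℝ) ∧
      ({x | r < ℓ x ∧ ℓ x ≤ r + Δ}.ncard : ℝ) ≤ A₀ * exp (δ * r))
    (hφS : ∀ x, φ x ∈ S) (hsurj : ∀ y ∈ S, ∃ x, φ x = y) (hfib : ∀ y, {x | φ x = y}.ncard ≤ M)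
    (hφ : ∀ x, |ℓ' (φ x) - (k * ℓ x + a)| ≤ E) :
    ∃ A, 1 ≤ A ∧ ∀ t ≥ a - E,
      exp (δ / k * t) / A ≤ ({y ∈ S | t < ℓ' y ∧ ℓ' y ≤ t + (k * Δ + 2 * E)}.ncard : ℝ) ∧
      ({y ∈ S | t < ℓ' y ∧ ℓ' y ≤ t + (k * Δ + 2 * E)}.ncard : ℝ) ≤ A * exp (δ / k * t) := by
  obtain ⟨U, hU⟩ := exists_ncard_shell_le_of_coarselyAffine hk hE hδ hΔ hfin
    (fun r hr => (hshell r hr).2) hsurj hφ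
  set L := A₀ * M * exp (δ / k * (a - E))
  refine ⟨max 1 (max L U), le_max_left _ _, fun t ht => ⟨?_, (hU t ht).trans ?_⟩⟩
  · rw [div_le_iff₀ (by positivity)]
    refine (exp_le_mul_ncard_shell_of_coarselyAffine hk hA₀ hfin (fun r hr => (hshell r hr).1)
      hφS hsurj hfib hφ ht).trans ?_
    rw [mul_comm]
    gcongr
    exact le_max_of_le_right (le_max_left _ _)
  · gcongr
    exact le_max_of_le_right (le_max_right _ _)

end CoarselyAffine

end Growth

theorem image_purely_exponential_half_rate_general
    {G : Type*} [Group G] {X : Type*} [MetricSpace X]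
    [MulAction G X] (o : X)
    (hproper : ProperAction G o)
    (δ Δ A₀ : ℝ)
    (hPE : PurelyExponentialWith G o δ Δ A₀)
    (B : Set X) (M : ℕ) (a E : ℝ) (hE : 0 ≤ E)
    (φ : G → X)
    (hφB : ∀ g : G, φ g ∈ B)
    (hφsurj : ∀ b ∈ B, ∃ g : G, φ g = b)
    (hfib : ∀ b : X, ({g : G | φ g = b}).ncard ≤ M)
    (hnorm : ∀ g : G, |dist o (φ g) - (2 * dist o (g • o) + a)| ≤ E) :
    (∃ Δ' : ℝ, 0 < Δ' ∧ ∃ A : ℝ, 1 ≤ A ∧ ∃ T : ℝ, ∀ t ≥ T,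
      Real.exp (t * δ / 2) / A ≤
          (({b ∈ B | t < dist o b ∧ dist o b ≤ t + Δ'}).ncard : ℝ) ∧
      (({b ∈ B | t < dist o b ∧ dist o b ≤ t + Δ'}).ncard : ℝ) ≤
          A * Real.exp (t * δ / 2)) ∧
    growthRateX o B = δ / 2 ∧
    ¬ Summable fun b : B => Real.exp (-(δ / 2) * dist o (b : X)) := by
  obtain ⟨hδ, hΔ, hA₀, hshell⟩ := hPE
  have hfin : ∀ r, {g : G | dist o (g • o) ≤ r}.Finite := hproper o
  have hBfin := finite_sublevel_of_coarselyAffine (ℓ' := dist o) two_pos hfin hφsurj hnorm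
  obtain ⟨A, hA, hBshell⟩ := exists_shell_bounds_of_coarselyAffine two_pos hE hδ hΔ
    (by linarith) hfin hshell hφB hφsurj hfib hnorm
  have hΔ' : 0 < 2 * Δ + 2 * E := by linarith
  refine ⟨⟨2 * Δ + 2 * E, hΔ', A, hA, a - E, fun t ht => ?_⟩, ?_, ?_⟩
  · rw [mul_div_assoc, mul_comm t]
    exact hBshell t ht
  · exact (tendsto_log_ncard_sublevel_div_of_shell_bounds (half_pos hδ) hΔ' (by linarith) hBfin
      hBshell).limsup_eq
  · exact not_summable_exp_neg_of_shell_ge (half_pos hδ).le (by linarith) hBfin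
      fun t ht => (hBshell t ht).1

/-- **Lemma.** If `G` has purely exponential growth with rate `δ` and `φ : G → B ⊆ X` is a
bounded-to-one surjection with `|d(o, φ(g)) − (2|g| + a)| ≤ E`, then `B` has purely
exponential growth with rate `δ/2`; in particular `δ_B = δ/2` and `B` is divergent. -/
theorem image_purely_exponential_half_rate
    {G : Type*} [Group G] {X : Type*} [MetricSpace X]
    [MulAction G X] [IsIsometricSMul G X] (o : X)
    (hproper : ProperAction G o)
    (δ Δ A₀ : ℝ)
    (hPE : PurelyExponentialWith G o δ Δ A₀)
    (B : Set X) (M : ℕ) (a E : ℝ) (hE : 0 ≤ E)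
    (φ : G → X)
    (hφB : ∀ g : G, φ g ∈ B)
    (hφsurj : ∀ b ∈ B, ∃ g : G, φ g = b)
    (hfib : ∀ b : X, ({g : G | φ g = b}).ncard ≤ M)
    (hnorm : ∀ g : G, |dist o (φ g) - (2 * dist o (g • o) + a)| ≤ E) :
    (∃ Δ' : ℝ, 0 < Δ' ∧ ∃ A : ℝ, 1 ≤ A ∧ ∃ T : ℝ, ∀ t ≥ T,
      Real.exp (t * δ / 2) / A ≤
          (({b ∈ B | t < dist o b ∧ dist o b ≤ t + Δ'}).ncard : ℝ) ∧
      (({b ∈ B | t < dist o b ∧ dist o b ≤ t + Δ'}).ncard : ℝ) ≤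
          A * Real.exp (t * δ / 2)) ∧
    growthRateX o B = δ / 2 ∧
    ¬ Summable fun b : B => Real.exp (-(δ / 2) * dist o (b : X)) :=
  image_purely_exponential_half_rate_general o hproper δ Δ A₀ hPE B M a E hE φ hφB hφsurj hfib hnorm

end ACcogrowth
end
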